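/- arXiv:1304.6659 — 2 statements merged into one kernel-verified Lean document; each statement's English description precedes it below -/
import Mathlib

section
/- Let A be the 4×5 integer matrix with rows (0,1,−1,1,1), (0,2,−2,2,2), (1,−3,4,−2,−3), (1,−1,2,−2,−2) (the electrodynamics example with variables a = charge, b = potential, c = capacitance, d = inductance, e = resistance). Then the toric ideal I_A ⊆ ℚ[a,b,c,d,e] equals the ideal generated by the three binomials b c − a, d − c e², and b d − a e². -/
open MvPolynomial

/-- The monomial `x^u = ∏ i, x i ^ u i` in `ℚ[x_1,…,x_n]`. -/
noncomputable def monoP {n : ℕ} (u : Fin n → ℕ) : MvPolynomial (Fin n) ℚ :=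
  ∏ i, X i ^ u i

/-- The ℚ-algebra homomorphism `φ_A : ℚ[x_1,…,x_n] → ℚ[t_1^{±1},…,t_d^{±1}]`
(the group algebra of `ℤ^d` over `ℚ`) sending `x_i` to `t^{a_i}`, where
`a_i` is the `i`-th column of the integer matrix `A`. -/
noncomputable def phi {d n : ℕ} (A : Matrix (Fin d) (Fin n) ℤ) :
    MvPolynomial (Fin n) ℚ →ₐ[ℚ] AddMonoidAlgebra ℚ (Fin d → ℤ) :=
  MvPolynomial.aeval fun i => AddMonoidAlgebra.single (fun j => A j i) (1 : ℚ)

/-- The toric ideal `I_A ⊆ ℚ[x_1,…,x_n]`: the kernel of `φ_A`. -/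
noncomputable def toricIdeal {d n : ℕ} (A : Matrix (Fin d) (Fin n) ℤ) :
    Ideal (MvPolynomial (Fin n) ℚ) :=
  RingHom.ker (phi A)

/-- The electrodynamics matrix: rows `(0,1,-1,1,1)`, `(0,2,-2,2,2)`,
`(1,-3,4,-2,-3)`, `(1,-1,2,-2,-2)`; variables `a` = charge, `b` = potential,
`c` = capacitance, `d` = inductance, `e` = resistance. -/
noncomputable def Aelec : Matrix (Fin 4) (Fin 5) ℤ :=
  !![0, 1, -1, 1, 1; 0, 2, -2, 2, 2; 1, -3, 4, -2, -3; 1, -1, 2, -2, -2]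

/-!
Modulo `J = (b c - a, d - c e², b d - a e²)` we have `a ≡ b c` and `d ≡ c e²`, so every polynomial
is congruent to one in `ℚ[b, c, e]`. The columns of `A` belonging to `b`, `c`, `e` are linearly
independent, so distinct monomials in `b, c, e` have distinct images under `φ_A`, and `φ_A` is
injective on `ℚ[b, c, e]`. Hence a polynomial in `I_A` is congruent modulo `J` to an element of
`ker φ_A ∩ ℚ[b, c, e] = 0`. Conversely each generator of `J` is a difference of two monomials
with the same `A`-degree.
-/

theorem ker_eq_of_retraction_modulo {F R S T : Type*} [Ring R] [Ring S] [Ring T]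
    [FunLike F R S] [RingHomClass F R S] (f : F) (J : Ideal R) (hJ : J ≤ RingHom.ker f)
    (ι : T →+* R) (τ : R →+* T) (hι : Function.Injective (f ∘ ι))
    (hτ : ∀ x, ι (τ x) - x ∈ J) : RingHom.ker f = J := by
  refine le_antisymm (fun x hx => ?_) hJ
  have hfx : f (ι (τ x)) = 0 := by
    have := hJ (hτ x)
    rwa [RingHom.mem_ker, map_sub, RingHom.mem_ker.mp hx, sub_zero] at this
  have hτx : τ x = 0 := hι (by simpa using hfx)
  simpa [hτx] using hτ x

theorem MvPolynomial.sub_mem_of_forall_X_sub_mem {σ R : Type*} [CommRing R]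
    (φ : MvPolynomial σ R →ₐ[R] MvPolynomial σ R) (J : Ideal (MvPolynomial σ R))
    (h : ∀ i, φ (X i) - X i ∈ J) (p : MvPolynomial σ R) : φ p - p ∈ J := by
  have : (Ideal.Quotient.mkₐ R J).comp φ = Ideal.Quotient.mkₐ R J :=
    algHom_ext fun i => Ideal.Quotient.eq.mpr (h i)
  exact Ideal.Quotient.eq.mp (DFunLike.congr_fun this p)

section Toric

variable {d n : ℕ}

theorem phi_X (A : Matrix (Fin d) (Fin n) ℤ) (i : Fin n) :
    phi A (X i) = AddMonoidAlgebra.single (A.col i) 1 := by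
  simp only [phi, aeval_X]
  rfl

noncomputable def exponentHom (A : Matrix (Fin d) (Fin n) ℤ) : (Fin n →₀ ℕ) →+ (Fin d → ℤ) where
  toFun u := A.mulVec fun i => (u i : ℤ)
  map_zero' := Matrix.mulVec_zero A
  map_add' u v := by
    simp only [Finsupp.coe_add, Pi.add_apply, Nat.cast_add, ← Matrix.mulVec_add]
    rfl

theorem phi_eq_mapDomainAlgHom (A : Matrix (Fin d) (Fin n) ℤ) :
    phi A = AddMonoidAlgebra.mapDomainAlgHom ℚ ℚ (exponentHom A) := by
  refine algHom_ext fun i => ?_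
  have hcast : (fun k => ((Finsupp.single i 1 : Fin n →₀ ℕ) k : ℤ)) = Pi.single i 1 := by
    ext k
    simp [Finsupp.single_apply, Pi.single_apply, eq_comm]
  rw [phi_X, AddMonoidAlgebra.mapDomainAlgHom_apply, X, ← single_eq_monomial,
    AddMonoidAlgebra.mapDomain_single]
  simp [exponentHom, hcast]

theorem phi_injective {A : Matrix (Fin d) (Fin n) ℤ} (hA : Function.Injective A.mulVec) :
    Function.Injective (phi A) := by
  rw [phi_eq_mapDomainAlgHom]
  refine AddMonoidAlgebra.mapDomain_injective fun u v huv => ?_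
  ext i
  exact_mod_cast congrFun (hA (a₁ := fun i => (u i : ℤ)) (a₂ := fun i => (v i : ℤ)) huv) i

theorem phi_comp_rename {m : ℕ} (A : Matrix (Fin d) (Fin n) ℤ) (g : Fin m → Fin n) :
    (phi A).comp (rename g) = phi (A.submatrix id g) := by
  refine algHom_ext fun i => ?_
  simp only [AlgHom.coe_comp, Function.comp_apply, rename_X, phi_X]
  rfl

end Toric

noncomputable def electrodynamicsIdeal : Ideal (MvPolynomial (Fin 5) ℚ) :=
  Ideal.span {X 1 * X 2 - X 0, X 3 - X 2 * X 4 ^ 2, X 1 * X 3 - X 0 * X 4 ^ 2}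

theorem electrodynamicsIdeal_le_toricIdeal : electrodynamicsIdeal ≤ toricIdeal Aelec := by
  rw [electrodynamicsIdeal, Ideal.span_le]
  rintro g (rfl | rfl | rfl) <;>
  · simp only [SetLike.mem_coe, toricIdeal, RingHom.mem_ker, map_sub, map_mul, map_pow, phi_X,
      AddMonoidAlgebra.single_pow, AddMonoidAlgebra.single_mul_single, one_pow, mul_one,
      sub_eq_zero]
    congr 1
    ext j
    fin_cases j <;> rfl

/-- `a ↦ b c`, `d ↦ c e²`, where `b, c, e` become the variables `0, 1, 2` of the target. -/
noncomputable def electrodynamicsRetraction :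
    MvPolynomial (Fin 5) ℚ →ₐ[ℚ] MvPolynomial (Fin 3) ℚ :=
  aeval ![X 0 * X 1, X 0, X 1, X 1 * X 2 ^ 2, X 2]

theorem rename_electrodynamicsRetraction_sub_mem (p : MvPolynomial (Fin 5) ℚ) :
    rename ![1, 2, 4] (electrodynamicsRetraction p) - p ∈ electrodynamicsIdeal := by
  refine sub_mem_of_forall_X_sub_mem ((rename _).comp electrodynamicsRetraction) _ (fun i => ?_) p
  fin_cases i <;>
    simp only [Fin.isValue, Fin.zero_eta, Fin.mk_one, Fin.reduceFinMk, AlgHom.coe_comp,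
      Function.comp_apply, electrodynamicsRetraction, aeval_X, Matrix.cons_val,
      Matrix.cons_val_zero, Matrix.cons_val_one, map_mul, map_pow, rename_X, sub_self, zero_mem]
  · exact Ideal.subset_span (Set.mem_insert _ _)
  · rw [← Ideal.neg_mem_iff, neg_sub]
    exact Ideal.subset_span (Set.mem_insert_of_mem _ (Set.mem_insert _ _))

theorem mulVec_Aelec_submatrix_injective :
    Function.Injective (Aelec.submatrix id ![1, 2, 4]).mulVec := by
  intro v w h
  have h0 := congrFun h 0
  have h2 := congrFun h 2
  have h3 := congrFun h 3
  simp only [Matrix.mulVec, dotProduct, Fin.sum_univ_three, Aelec, Matrix.submatrix_apply, id_eq,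
    Matrix.of_apply, Matrix.cons_val', Matrix.cons_val_fin_one, Matrix.cons_val_zero,
    Matrix.cons_val_one, Matrix.cons_val, one_mul, neg_mul] at h0 h2 h3
  ext i
  fin_cases i <;> dsimp <;> omega

/-- The toric ideal of the electrodynamics matrix is generated
by the three binomials `b c - a`, `d - c e²` and `b d - a e²`. -/
theorem toricIdeal_electrodynamics :
    toricIdeal Aelec = Ideal.span
      ({ X 1 * X 2 - X 0,
         X 3 - X 2 * X 4 ^ 2,
         X 1 * X 3 - X 0 * X 4 ^ 2 } : Set (MvPolynomial (Fin 5) ℚ)) := by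
  refine ker_eq_of_retraction_modulo (phi Aelec) electrodynamicsIdeal
    electrodynamicsIdeal_le_toricIdeal (rename ![(1 : Fin 5), 2, 4]).toRingHom
    electrodynamicsRetraction.toRingHom ?_ rename_electrodynamicsRetraction_sub_mem
  show Function.Injective ((phi Aelec).comp (rename ![1, 2, 4]))
  rw [phi_comp_rename]
  exact phi_injective mulVec_Aelec_submatrix_injective
end

section
/- Let A be the 4×5 integer matrix with rows (0,1,−1,1,1), (0,2,−2,2,2), (1,−3,4,−2,−3), (1,−1,2,−2,−2), with variables a,b,c,d,e. Then each of the three binomials b c − a, d − c e², and b d − a e² is a primitive element of the toric ideal I_A ⊆ ℚ[a,b,c,d,e]. -/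
open MvPolynomial

/-- `x^u - x^v` is a primitive binomial of the toric ideal `I_A`:
it lies in `I_A`, `u ≠ v`, and there is no binomial `x^{u'} - x^{v'} ∈ I_A`
with `u' ≠ v'`, `(u',v') ≠ (u,v)`, `u' ≤ u` and `v' ≤ v` componentwise. -/
def IsPrimitiveBinomial {d n : ℕ} (A : Matrix (Fin d) (Fin n) ℤ)
    (u v : Fin n → ℕ) : Prop :=
  u ≠ v ∧ monoP u - monoP v ∈ toricIdeal A ∧
    ∀ u' v' : Fin n → ℕ, u' ≠ v' → (u', v') ≠ (u, v) →
      monoP u' - monoP v' ∈ toricIdeal A → ¬(u' ≤ u ∧ v' ≤ v)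

/-! Over `ℤ` the kernel of `Aelec` is the lattice spanned by `(-1,1,1,0,0)` and `(0,0,-1,1,-2)`,
whose sum is `(-1,1,0,1,-2)`; these are the exponent differences `u - v` of the three binomials.
When `u` and `v` have disjoint supports, a divisor `x^{u'} - x^{v'}` of `x^u - x^v` in `I_A` gives a
kernel vector `u' - v'` conformal to `u - v` (same signs, smaller absolute values), so `x^u - x^v` is
primitive once the only such kernel vectors are `0` and `u - v`. For each of the three vectors the
explicit description of the kernel leaves no others.
-/

open Matrix

theorem phi_monoP {d n : ℕ} (A : Matrix (Fin d) (Fin n) ℤ) (u : Fin n → ℕ) :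
    phi A (monoP u) = AddMonoidAlgebra.single (A *ᵥ fun i => (u i : ℤ)) 1 := by
  simp only [monoP, phi, map_prod, map_pow, aeval_X, AddMonoidAlgebra.single_pow, one_pow]
  rw [AddMonoidAlgebra.prod_single, Finset.prod_const_one]
  congr 1
  ext j
  simp [mulVec, dotProduct, Finset.sum_apply, mul_comm]

theorem monoP_sub_monoP_mem_toricIdeal_iff {d n : ℕ} (A : Matrix (Fin d) (Fin n) ℤ)
    (u v : Fin n → ℕ) :
    monoP u - monoP v ∈ toricIdeal A ↔ (A *ᵥ fun i => (u i : ℤ) - v i) = 0 := by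
  rw [toricIdeal, RingHom.mem_ker, map_sub, sub_eq_zero, phi_monoP, phi_monoP,
    AddMonoidAlgebra.single_left_inj one_ne_zero, ← sub_eq_zero, ← mulVec_sub]
  rfl

def ConformalLE {ι : Type*} (w z : ι → ℤ) : Prop :=
  ∀ i, 0 ≤ w i ∧ w i ≤ z i ∨ z i ≤ w i ∧ w i ≤ 0

theorem isPrimitiveBinomial_of_conformalLE {d n : ℕ} {A : Matrix (Fin d) (Fin n) ℤ}
    {u v : Fin n → ℕ} (hdisj : ∀ i, u i = 0 ∨ v i = 0) (hne : u ≠ v)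
    (hker : (A *ᵥ fun i => (u i : ℤ) - v i) = 0)
    (hmin : ∀ w, A *ᵥ w = 0 → ConformalLE w (fun i => (u i : ℤ) - v i) →
      w = 0 ∨ w = fun i => (u i : ℤ) - v i) :
    IsPrimitiveBinomial A u v := by
  refine ⟨hne, (monoP_sub_monoP_mem_toricIdeal_iff A u v).2 hker, ?_⟩
  rintro u' v' hne' hproper hmem ⟨hu, hv⟩
  have hconf : ConformalLE (fun i => (u' i : ℤ) - v' i) (fun i => (u i : ℤ) - v i) := by
    intro i
    have := hu i
    have := hv i
    rcases hdisj i with h | h <;> simp only [h] at * <;> omega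
  rcases hmin _ ((monoP_sub_monoP_mem_toricIdeal_iff A u' v').1 hmem) hconf with hzero | hdiff
  · exact hne' (funext fun i => by
      have := congrFun hzero i
      simp only [Pi.zero_apply] at this
      omega)
  · refine hproper (Prod.ext (funext fun i => ?_) (funext fun i => ?_)) <;>
    · have := congrFun hdiff i
      have := hu i
      have := hv i
      rcases hdisj i with h | h <;> simp only [h] at * <;> omega

theorem Aelec_mulVec_eq_zero_iff (w : Fin 5 → ℤ) :
    Aelec *ᵥ w = 0 ↔ w 1 = -w 0 ∧ w 2 = w 1 - w 3 ∧ w 4 = -2 * w 3 := by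
  simp only [funext_iff, Fin.forall_fin_succ, IsEmpty.forall_iff, and_true, Pi.zero_apply, Aelec,
    mulVec, dotProduct, Fin.sum_univ_five, of_apply, cons_val', cons_val_zero, cons_val_one,
    cons_val, cons_val_succ, cons_val_fin_one]
  omega

/-- Each of the three binomials `b c - a`, `d - c e²` and
`b d - a e²` is a primitive element of the toric ideal of the electrodynamics
matrix. -/
theorem electrodynamics_primitive_binomials :
    IsPrimitiveBinomial Aelec ![0, 1, 1, 0, 0] ![1, 0, 0, 0, 0] ∧
    IsPrimitiveBinomial Aelec ![0, 0, 0, 1, 0] ![0, 0, 1, 0, 2] ∧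
    IsPrimitiveBinomial Aelec ![0, 1, 0, 1, 0] ![1, 0, 0, 0, 2] := by
  refine ⟨?_, ?_, ?_⟩ <;>
  refine isPrimitiveBinomial_of_conformalLE (by decide) (by decide)
    (by simp [Aelec_mulVec_eq_zero_iff]) fun w hw hwz => ?_ <;>
  · rw [Aelec_mulVec_eq_zero_iff] at hw
    simp only [ConformalLE, funext_iff, Pi.zero_apply, Fin.forall_fin_succ, Fin.succ_zero_eq_one,
      Fin.succ_one_eq_two, Fin.reduceSucc, IsEmpty.forall_iff, and_true, cons_val_zero,
      cons_val_succ, cons_val_fin_one] at hwz ⊢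
    omega
end
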